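/- Assume n is odd, ω₀ is an odd integer with ω₀ > −(n−1)/2, σ ∈ ℝ, γ̃ = n + ω₀ − 1, and μ : (−r₀', r₀') → ℝ is a smooth even function (some 0 < r₀' ≤ −r₀) with μ(0) = 0 and μ(r) = μ̃(log(−r)) for −r₀' < r < 0. Then there exist ε > 0 and a smooth even function g : (−ε, ε) → ℝ such that g(r) = G(r) for all r ∈ (−ε, 0). (This expresses that the joint branes N ∪ N̂, obtained by reflecting the brane across the black-hole/white-hole singularity r = 0, form a C^∞ hypersurface in ℝ² × S₀.) -/
import Mathlib



/-- **Smooth transition through the singularity, case `γ = n + ω₀ - 1`, `σ ∈ ℝ`.**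
If `n` is odd, `ω₀` is an odd integer with `ω₀ > -(n-1)/2`, `σ ∈ ℝ`,
`γ = n + ω₀ - 1`, and `μ` is a smooth even extension of `μ̃(log(-r))`, then
`G = dt/dr` extends to a smooth even function near `r = 0`, i.e. the joint branes
`N ∪ N̂` form a `C^∞` hypersurface in `ℝ² × S₀`. -/
theorem smooth_transition_noncritical_odd
    (n : ℕ) (hn : 3 ≤ n)
    (m Λ κt κ σ ω₀ ρ₀ γ r₀ : ℝ)
    (hm : 0 < m) (hΛ : Λ ≤ 0)
    (hκt : κt = -1 ∨ κt = 0 ∨ κt = 1) (hΛκt : Λ = 0 → κt = 1)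
    (hκ : κ ≠ 0) (hρ₀ : 0 < ρ₀) (hγ0 : 0 < γ) (hr₀ : r₀ < 0)
    (lam μt : ℝ → ℝ)
    (hlam : ContDiff ℝ (⊤ : ℕ∞) lam)
    (hlam0 : Filter.Tendsto lam Filter.atBot (nhds 0))
    (hμt : ∀ t : ℝ, HasDerivAt μt (lam t) t)
    (hμt0 : Filter.Tendsto μt Filter.atBot (nhds 0))
    (θ Φ G : ℝ → ℝ)
    (hθ : ∀ r < (0:ℝ), θ r
      = m + 2 * Λ / ((n : ℝ) * ((n : ℝ) + 1)) * (-r) ^ ((n : ℝ) + 1)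
        - κt * (-r) ^ ((n : ℝ) - 1))
    (hΦ : ∀ r < (0:ℝ), Φ r
      = m * (-r) ^ (2 * γ - ((n : ℝ) - 1))
        + 2 * Λ / ((n : ℝ) * ((n : ℝ) + 1)) * (-r) ^ (2 * γ + 2)
        - κt * (-r) ^ (2 * γ)
        + κ ^ 2 / (n : ℝ) ^ 2
          * (ρ₀ ^ 2 * (-r) ^ (2 * (γ + 1 - ((n : ℝ) + ω₀)))
               * Real.exp (-2 * μt (Real.log (-r)))
             + 2 * σ * ρ₀ * (-r) ^ (2 * γ + 2 - ((n : ℝ) + ω₀))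
               * Real.exp (-μt (Real.log (-r)))
             + σ ^ 2 * (-r) ^ (2 * γ + 2)))
    (hG : ∀ r < (0:ℝ), G r
      = -(κ / (n : ℝ))
          * (σ * (-r) ^ ((n : ℝ) + γ)
             + ρ₀ * (-r) ^ (γ - ω₀) * Real.exp (-μt (Real.log (-r))))
          / (θ r * Real.sqrt (Φ r)))
    (r₀' : ℝ) (hr₀'0 : 0 < r₀') (hr₀' : r₀' ≤ -r₀)
    (μ : ℝ → ℝ)
    (hμs : ContDiffOn ℝ (⊤ : ℕ∞) μ (Set.Ioo (-r₀') r₀'))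
    (hμeven : ∀ r ∈ Set.Ioo (-r₀') r₀', μ (-r) = μ r)
    (hμ0 : μ 0 = 0)
    (hμeq : ∀ r : ℝ, -r₀' < r → r < 0 → μ r = μt (Real.log (-r)))
    (hnodd : Odd n)
    (hω₀odd : ∃ z : ℤ, Odd z ∧ ω₀ = (z : ℝ))
    (hω₀gt : -((n : ℝ) - 1) / 2 < ω₀)
    (hγ : γ = (n : ℝ) + ω₀ - 1) :
    ∃ ε : ℝ, 0 < ε ∧ ∃ g : ℝ → ℝ,
      ContDiffOn ℝ (⊤ : ℕ∞) g (Set.Ioo (-ε) ε)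
      ∧ (∀ r ∈ Set.Ioo (-ε) ε, g (-r) = g r)
      ∧ ∀ r : ℝ, -ε < r → r < 0 → g r = G r := by
  obtain ⟨z, hzodd, hzω⟩ := hω₀odd
  obtain ⟨a, hna⟩ := hnodd
  obtain ⟨b, hzb⟩ := hzodd
  -- integer positivity of the key exponent
  have hE1R : (0:ℝ) < (n:ℝ) + 2*(z:ℝ) - 1 := by rw [hzω] at hω₀gt; linarith
  have hE1 : (0:ℤ) < (n:ℤ) + 2*z - 1 := by exact_mod_cast hE1R
  -- natural number exponents
  set k1 : ℕ := ((n:ℤ) + 2*z - 1).toNat with hk1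
  set k5 : ℕ := ((n:ℤ) + z).toNat with hk5
  set k6 : ℕ := ((2*(n:ℤ)) + 2*z).toNat with hk6
  set k3 : ℕ := ((2*(n:ℤ)) + 2*z - 2).toNat with hk3
  set kb : ℕ := ((2*(n:ℤ)) + z - 1).toNat with hkb
  have hk1z : (k1:ℤ) = (n:ℤ) + 2*z - 1 := by omega
  have hk5z : (k5:ℤ) = (n:ℤ) + z := by omega
  have hk6z : (k6:ℤ) = 2*(n:ℤ) + 2*z := by omega
  have hk3z : (k3:ℤ) = 2*(n:ℤ) + 2*z - 2 := by omega
  have hkbz : (kb:ℤ) = 2*(n:ℤ) + z - 1 := by omega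
  have hek1 : Even k1 := ⟨k1/2, by omega⟩
  have hek5 : Even k5 := ⟨k5/2, by omega⟩
  have hek6 : Even k6 := ⟨k6/2, by omega⟩
  have hek3 : Even k3 := ⟨k3/2, by omega⟩
  have hekb : Even kb := ⟨kb/2, by omega⟩
  have henp : Even (n+1) := ⟨(n+1)/2, by omega⟩
  have henm : Even (n-1) := ⟨(n-1)/2, by omega⟩
  have hk1p : 0 < k1 := by omega
  have hk5p : 0 < k5 := by omega
  have hk6p : 0 < k6 := by omega
  have hk3p : 0 < k3 := by omega
  have hkbp : 0 < kb := by omega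
  -- real cast facts for exponents
  have hzR : (z:ℝ) = ω₀ := hzω.symm
  have hc1 : 2*γ - ((n:ℝ)-1) = (k1:ℝ) := by
    have h' : ((k1:ℝ)) = (n:ℝ) + 2*(z:ℝ) - 1 := by exact_mod_cast hk1z
    rw [h', hγ, hzR]; ring
  have hc3 : 2*γ = (k3:ℝ) := by
    have h' : ((k3:ℝ)) = 2*(n:ℝ) + 2*(z:ℝ) - 2 := by exact_mod_cast hk3z
    rw [h', hγ, hzR]; ring
  have hc6 : 2*γ + 2 = (k6:ℝ) := by
    have h' : ((k6:ℝ)) = 2*(n:ℝ) + 2*(z:ℝ) := by exact_mod_cast hk6z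
    rw [h', hγ, hzR]; ring
  have hc5 : 2*γ + 2 - ((n:ℝ) + ω₀) = (k5:ℝ) := by
    have h' : ((k5:ℝ)) = (n:ℝ) + (z:ℝ) := by exact_mod_cast hk5z
    rw [h', hγ, hzR]; ring
  have hcb : (n:ℝ) + γ = (kb:ℝ) := by
    have h' : ((kb:ℝ)) = 2*(n:ℝ) + (z:ℝ) - 1 := by exact_mod_cast hkbz
    rw [h', hγ, hzR]; ring
  have hc0 : 2*(γ + 1 - ((n:ℝ) + ω₀)) = 0 := by rw [hγ]; ring
  have hcm : γ - ω₀ = ((n-1 : ℕ):ℝ) := by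
    have h' : ((n-1:ℕ):ℝ) = (n:ℝ) - 1 := by
      have : (1:ℕ) ≤ n := by omega
      push_cast [this]; ring
    rw [h', hγ]; ring
  have hcp : (n:ℝ) + 1 = ((n+1 : ℕ):ℝ) := by push_cast; ring
  -- the smooth even candidates
  set θh : ℝ → ℝ := fun r => m + 2 * Λ / ((n : ℝ) * ((n : ℝ) + 1)) * r ^ (n+1)
      - κt * r ^ (n-1) with hθh
  set Φh : ℝ → ℝ := fun r => m * r ^ k1 + 2 * Λ / ((n : ℝ) * ((n : ℝ) + 1)) * r ^ k6
      - κt * r ^ k3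
      + κ ^ 2 / (n : ℝ) ^ 2
        * (ρ₀ ^ 2 * Real.exp (-2 * μ r)
           + 2 * σ * ρ₀ * r ^ k5 * Real.exp (-μ r)
           + σ ^ 2 * r ^ k6) with hΦh
  set g : ℝ → ℝ := fun r => -(κ / (n : ℝ))
      * (σ * r ^ kb + ρ₀ * r ^ (n-1) * Real.exp (-μ r))
      / (θh r * Real.sqrt (Φh r)) with hg
  have h0mem : (0:ℝ) ∈ Set.Ioo (-r₀') r₀' := ⟨by linarith, hr₀'0⟩
  have hμc : ContinuousAt μ 0 := (hμs.contDiffAt (isOpen_Ioo.mem_nhds h0mem)).continuousAt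
  have hθh0 : θh 0 = m := by
    simp [hθh, zero_pow (by omega : n+1 ≠ 0), zero_pow (by omega : n-1 ≠ 0)]
  have hΦh0 : Φh 0 = κ ^ 2 / (n:ℝ)^2 * ρ₀ ^ 2 := by
    simp [hΦh, hμ0, zero_pow hk1p.ne', zero_pow hk6p.ne', zero_pow hk3p.ne',
      zero_pow hk5p.ne']
  have hn0 : (0:ℝ) < (n:ℝ) := by positivity
  have hΦh0pos : 0 < Φh 0 := by rw [hΦh0]; positivity
  have hθhc : ContinuousAt θh 0 := by fun_prop
  have hΦhc : ContinuousAt Φh 0 := by fun_prop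
  have hev1 : ∀ᶠ r in nhds (0:ℝ), 0 < θh r :=
    hθhc.eventually (eventually_gt_nhds (by rw [hθh0]; exact hm))
  have hev2 : ∀ᶠ r in nhds (0:ℝ), 0 < Φh r :=
    hΦhc.eventually (eventually_gt_nhds hΦh0pos)
  have hev3 : ∀ᶠ r in nhds (0:ℝ), r ∈ Set.Ioo (-r₀') r₀' :=
    isOpen_Ioo.mem_nhds h0mem
  obtain ⟨ε, hε0, hball⟩ := Metric.eventually_nhds_iff.mp ((hev1.and hev2).and hev3)
  have hS : ∀ r ∈ Set.Ioo (-ε) ε, (0 < θh r ∧ 0 < Φh r) ∧ r ∈ Set.Ioo (-r₀') r₀' := by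
    intro r hr
    refine hball ?_
    rw [Real.dist_eq, sub_zero, abs_lt]
    exact ⟨hr.1, hr.2⟩
  have hsub : Set.Ioo (-ε) ε ⊆ Set.Ioo (-r₀') r₀' := fun r hr => (hS r hr).2
  refine ⟨ε, hε0, g, ?_, ?_, ?_⟩
  · -- smoothness
    have hμS : ContDiffOn ℝ (⊤:ℕ∞) μ (Set.Ioo (-ε) ε) := hμs.mono hsub
    have hpow : ∀ k : ℕ, ContDiffOn ℝ (⊤:ℕ∞) (fun r : ℝ => r ^ k) (Set.Ioo (-ε) ε) :=
      fun k => (contDiff_id.pow k).contDiffOn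
    have hexp2 : ContDiffOn ℝ (⊤:ℕ∞) (fun r => Real.exp (-2 * μ r)) (Set.Ioo (-ε) ε) :=
      Real.contDiff_exp.comp_contDiffOn (contDiffOn_const.mul hμS)
    have hexp1 : ContDiffOn ℝ (⊤:ℕ∞) (fun r => Real.exp (-μ r)) (Set.Ioo (-ε) ε) :=
      Real.contDiff_exp.comp_contDiffOn hμS.neg
    have hθhS : ContDiffOn ℝ (⊤:ℕ∞) θh (Set.Ioo (-ε) ε) := by
      rw [hθh]
      exact (contDiffOn_const.add (contDiffOn_const.mul (hpow _))).sub
        (contDiffOn_const.mul (hpow _))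
    have hΦhS : ContDiffOn ℝ (⊤:ℕ∞) Φh (Set.Ioo (-ε) ε) := by
      rw [hΦh]
      exact ((contDiffOn_const.mul (hpow _)).add
          (contDiffOn_const.mul (hpow _))).sub (contDiffOn_const.mul (hpow _))
        |>.add (contDiffOn_const.mul
          (((contDiffOn_const.mul hexp2).add
            ((contDiffOn_const.mul (hpow _)).mul hexp1)).add
            (contDiffOn_const.mul (hpow _))))
    have hnum : ContDiffOn ℝ (⊤:ℕ∞) (fun r => -(κ / (n : ℝ))
        * (σ * r ^ kb + ρ₀ * r ^ (n-1) * Real.exp (-μ r))) (Set.Ioo (-ε) ε) :=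
      contDiffOn_const.mul ((contDiffOn_const.mul (hpow _)).add
        ((contDiffOn_const.mul (hpow _)).mul hexp1))
    have hsqrt : ContDiffOn ℝ (⊤:ℕ∞) (fun r => Real.sqrt (Φh r)) (Set.Ioo (-ε) ε) :=
      hΦhS.sqrt (fun r hr => ((hS r hr).1.2).ne')
    rw [hg]
    refine (hnum.div (hθhS.mul hsqrt) ?_)
    intro r hr
    have h1 := (hS r hr).1.1
    have h2 := (hS r hr).1.2
    positivity
  · -- evenness
    intro r hr
    have hrbig := hsub hr
    rw [hg]
    simp only
    rw [hθh, hΦh]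
    simp only
    rw [hμeven r hrbig, hek1.neg_pow, hek5.neg_pow, hek6.neg_pow, hek3.neg_pow,
      hekb.neg_pow, henp.neg_pow, henm.neg_pow]
  · -- agreement with G
    intro r hr1 hr2
    have hrS : r ∈ Set.Ioo (-ε) ε := ⟨hr1, lt_trans hr2 hε0⟩
    have hrbig := hsub hrS
    have hμr : μt (Real.log (-r)) = μ r := (hμeq r hrbig.1 hr2).symm
    have hcm' : (n:ℝ) - 1 = ((n-1 : ℕ):ℝ) := by
      have : (1:ℕ) ≤ n := by omega
      push_cast [this]; ring
    have hθeq : θ r = θh r := by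
      rw [hθ r hr2, hθh]
      simp only
      rw [hcp, hcm', Real.rpow_natCast, Real.rpow_natCast, henp.neg_pow, henm.neg_pow]
    have hΦeq : Φ r = Φh r := by
      rw [hΦ r hr2, hΦh]
      simp only
      rw [hμr, hc0, hc1, hc5, hc6, hc3, Real.rpow_zero, Real.rpow_natCast,
        Real.rpow_natCast, Real.rpow_natCast, Real.rpow_natCast,
        hek1.neg_pow, hek5.neg_pow, hek6.neg_pow, hek3.neg_pow]
      ring
    rw [hG r hr2, hθeq, hΦeq, hμr, hcb, hcm, Real.rpow_natCast, Real.rpow_natCast,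
      hekb.neg_pow, henm.neg_pow, hg]
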